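/- If a tileset (finite set of Wang tiles) admits a tiling of the plane with a nonzero period vector, then it admits a doubly periodic tiling (periodic with two linearly independent period vectors). -/
import Mathlib


structure WangTileset where
  T : Type
  tFin : Fintype T
  C : Type
  cFin : Fintype C
  up : T → C
  down : T → C
  left : T → C
  right : T → C

def WangTileset.IsTiling (S : WangTileset) (c : ℤ × ℤ → S.T) : Prop :=
  ∀ i j : ℤ, S.right (c (i, j)) = S.left (c (i + 1, j)) ∧
    S.up (c (i, j)) = S.down (c (i, j + 1))

def IsPeriodOf {T : Type} (c : ℤ × ℤ → T) (v : ℤ × ℤ) : Prop :=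
  v ≠ 0 ∧ ∀ p : ℤ × ℤ, c (p + v) = c p

/-! ### Auxiliary: the periodization map `rho` -/

private def rho (i₁ m x : ℤ) : ℤ := i₁ + (x - i₁) % m

private lemma rho_lb {m : ℤ} (hm : 0 < m) (i₁ x : ℤ) : i₁ ≤ rho i₁ m x := by
  have := Int.emod_nonneg (x - i₁) hm.ne'
  unfold rho; omega

private lemma rho_ub {m : ℤ} (hm : 0 < m) (i₁ x : ℤ) : rho i₁ m x < i₁ + m := by
  have := Int.emod_lt_of_pos (x - i₁) hm
  unfold rho; omega

private lemma rho_id {m i₁ x : ℤ} (h1 : i₁ ≤ x) (h2 : x < i₁ + m) : rho i₁ m x = x := by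
  unfold rho
  rw [Int.emod_eq_of_lt (by omega) (by omega)]
  omega

private lemma rho_add_mul (i₁ m x k : ℤ) : rho i₁ m (x + k * m) = rho i₁ m x := by
  unfold rho
  congr 1
  rw [show x + k * m - i₁ = (x - i₁) + k * m by ring, Int.add_mul_emod_self_right]

private lemma rho_shift {m : ℤ} (hm : 0 < m) (i₁ x t : ℤ) :
    rho i₁ m (x + t) = rho i₁ m (rho i₁ m x + t) := by
  have hspec : x = rho i₁ m x + ((x - i₁) / m) * m := by
    have h := Int.mul_ediv_add_emod (x - i₁) m
    unfold rho; linarith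
  have e : rho i₁ m (x + t) = rho i₁ m ((rho i₁ m x + t) + ((x - i₁) / m) * m) := by
    congr 1; linarith
  rw [e, rho_add_mul]

/-! ### Auxiliary: integer division/mod facts -/

private lemma ediv_emod_succ_lt {b j : ℤ} (hb : 0 < b) (h : j % b + 1 < b) :
    (j + 1) / b = j / b ∧ (j + 1) % b = j % b + 1 := by
  have h0 : 0 ≤ j % b := Int.emod_nonneg j hb.ne'
  have hj : b * (j / b) + j % b = j := Int.mul_ediv_add_emod j b
  constructor
  · rw [show j + 1 = (j % b + 1) + (j / b) * b by linarith,
      Int.add_mul_ediv_right _ _ hb.ne', Int.ediv_eq_zero_of_lt (by omega) h]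
    omega
  · rw [show j + 1 = (j % b + 1) + (j / b) * b by linarith, Int.add_mul_emod_self_right]
    exact Int.emod_eq_of_lt (by omega) h

private lemma ediv_emod_succ_eq {b j : ℤ} (hb : 0 < b) (h : j % b + 1 = b) :
    (j + 1) / b = j / b + 1 ∧ (j + 1) % b = 0 := by
  have hj : b * (j / b) + j % b = j := Int.mul_ediv_add_emod j b
  have e : j + 1 = 0 + (j / b + 1) * b := by linarith
  constructor
  · rw [e, Int.add_mul_ediv_right _ _ hb.ne', Int.zero_ediv]; omega
  · rw [e, Int.add_mul_emod_self_right, Int.zero_emod]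

private lemma ediv_emod_add_b {b : ℤ} (j : ℤ) (hb : 0 < b) :
    (j + b) / b = j / b + 1 ∧ (j + b) % b = j % b := by
  constructor
  · rw [show j + b = j + 1 * b by ring, Int.add_mul_ediv_right _ _ hb.ne']
  · rw [show j + b = j + 1 * b by ring, Int.add_mul_emod_self_right]

/-! ### The key lemma: a tiling with period `(a, b)`, `b > 0`, yields a tiling with
the extra horizontal period `(m, 0)`. -/

private lemma key {T C : Type} [Fintype T] (up down left right : T → C)
    (c : ℤ × ℤ → T)
    (ht : ∀ i j : ℤ, right (c (i, j)) = left (c (i + 1, j)) ∧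
      up (c (i, j)) = down (c (i, j + 1)))
    (a b : ℤ) (hb : 0 < b) (hv : ∀ p : ℤ × ℤ, c (p + (a, b)) = c p) :
    ∃ (c' : ℤ × ℤ → T) (m : ℤ), 0 < m ∧
      (∀ i j : ℤ, right (c' (i, j)) = left (c' (i + 1, j)) ∧
        up (c' (i, j)) = down (c' (i, j + 1))) ∧
      (∀ p, c' (p + (m, 0)) = c' p) ∧ (∀ p, c' (p + (a, b)) = c' p) := by
  classical
  set B : ℤ := |a| + 1 with hBdef
  have haB : a < B := by have := le_abs_self a; omega
  have haB' : -B < a := by have := neg_abs_le a; omega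
  have hB0 : 0 < B := by have := abs_nonneg a; omega
  have hnB : (((2 * B + 1).toNat : ℕ) : ℤ) = 2 * B + 1 := Int.toNat_of_nonneg (by omega)
  have hnb : ((b.toNat : ℕ) : ℤ) = b := Int.toNat_of_nonneg hb.le
  obtain ⟨k₁, k₂, hkne, hg⟩ :=
    Finite.exists_ne_map_eq_of_infinite
      (fun (k : ℕ) (s : Fin (2 * B + 1).toNat) (r : Fin b.toNat) =>
        c ((k : ℤ) * B - B + ((s : ℕ) : ℤ), ((r : ℕ) : ℤ)))
  wlog hk : k₁ < k₂ generalizing k₁ k₂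
  · exact this k₂ k₁ hkne.symm hg.symm (by omega)
  set i₁ : ℤ := (k₁ : ℤ) * B with hi₁def
  set m : ℤ := ((k₂ : ℤ) - (k₁ : ℤ)) * B with hmdef
  have hk' : (1 : ℤ) ≤ (k₂ : ℤ) - (k₁ : ℤ) := by
    have : (k₁ : ℤ) < (k₂ : ℤ) := by exact_mod_cast hk
    omega
  have hmB : B ≤ m := by nlinarith
  have hm0 : 0 < m := by omega
  have ham : a < m := by omega
  have ham' : -m < a := by omega
  -- repetition of the fundamental strip
  have hD : ∀ t r : ℤ, i₁ - B ≤ t → t ≤ i₁ + B → 0 ≤ r → r < b →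
      c (t, r) = c (t + m, r) := by
    intro t r h1 h2 h3 h4
    have hs : (t - i₁ + B).toNat < (2 * B + 1).toNat := by omega
    have hr : r.toNat < b.toNat := by omega
    have h' := congrFun (congrFun hg ⟨(t - i₁ + B).toNat, hs⟩) ⟨r.toNat, hr⟩
    simp only at h'
    rw [Int.toNat_of_nonneg (by omega : (0:ℤ) ≤ t - i₁ + B),
      Int.toNat_of_nonneg h3] at h'
    have e1 : i₁ - B + (t - i₁ + B) = t := by ring
    have e2 : (k₂ : ℤ) * B - B + (t - i₁ + B) = t + m := by
      rw [hi₁def, hmdef]; ring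
    rw [e1, e2] at h'
    exact h'
  -- the new tiling
  refine ⟨fun p => c (rho i₁ m (p.1 - a * (p.2 / b)), p.2 % b), m, hm0, ?_, ?_, ?_⟩
  · intro i j
    simp only
    have hr0 : 0 ≤ j % b := Int.emod_nonneg j hb.ne'
    have hr1 : j % b < b := Int.emod_lt_of_pos j hb
    constructor
    · -- horizontal matching
      set x : ℤ := i - a * (j / b) with hxd
      rw [show i + 1 - a * (j / b) = x + 1 by rw [hxd]; ring]
      set y : ℤ := rho i₁ m x with hyd
      have hy1 : i₁ ≤ y := rho_lb hm0 i₁ x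
      have hy2 : y < i₁ + m := rho_ub hm0 i₁ x
      have hshift : rho i₁ m (x + 1) = rho i₁ m (y + 1) := rho_shift hm0 i₁ x 1
      by_cases hcs : y + 1 < i₁ + m
      · rw [hshift, rho_id (by omega) hcs]
        exact (ht y (j % b)).1
      · have hρ1 : rho i₁ m (y + 1) = i₁ := by
          have e : rho i₁ m (y + 1) = rho i₁ m (i₁ + 1 * m) := by congr 1; omega
          rw [e, rho_add_mul]
          exact rho_id le_rfl (by omega)
        have h1 := (ht y (j % b)).1
        have h2 := hD i₁ (j % b) (by omega) (by omega) hr0 hr1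
        rw [hshift, hρ1, h1, show y + 1 = i₁ + m by omega, ← h2]
    · -- vertical matching
      set x : ℤ := i - a * (j / b) with hxd
      set y : ℤ := rho i₁ m x with hyd
      have hy1 : i₁ ≤ y := rho_lb hm0 i₁ x
      have hy2 : y < i₁ + m := rho_ub hm0 i₁ x
      by_cases hcs : j % b + 1 < b
      · obtain ⟨e1, e2⟩ := ediv_emod_succ_lt hb hcs
        rw [e1, e2]
        exact (ht y (j % b)).2
      · have hre : j % b + 1 = b := by omega
        obtain ⟨e1, e2⟩ := ediv_emod_succ_eq hb hre
        rw [e1, e2, show i - a * (j / b + 1) = x - a by rw [hxd]; ring]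
        have h1 := (ht y (j % b)).2
        rw [hre] at h1
        have h2 : c (y, b) = c (y - a, 0) := by
          have h := hv (y - a, 0)
          rw [show ((y - a, 0) : ℤ × ℤ) + (a, b) = (y, b) by
            rw [Prod.mk_add_mk, Prod.mk.injEq]; constructor <;> ring] at h
          exact h
        have hsh : rho i₁ m (x - a) = rho i₁ m (y - a) := by
          have h := rho_shift hm0 i₁ x (-a)
          rw [show x + -a = x - a by ring, show y + -a = y - a by ring] at h
          exact h
        have h3 : c (y - a, 0) = c (rho i₁ m (y - a), 0) := by
          by_cases hA : y - a < i₁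
          · have hrg : rho i₁ m (y - a) = y - a + m := by
              have e : rho i₁ m (y - a) = rho i₁ m ((y - a + m) + (-1) * m) := by
                congr 1; ring
              rw [e, rho_add_mul]
              exact rho_id (by omega) (by omega)
            rw [hrg]
            exact hD (y - a) 0 (by omega) (by omega) le_rfl hb
          · by_cases hC : i₁ + m ≤ y - a
            · have hrg : rho i₁ m (y - a) = y - a - m := by
                have e : rho i₁ m (y - a) = rho i₁ m ((y - a - m) + 1 * m) := by
                  congr 1; ring
                rw [e, rho_add_mul]
                exact rho_id (by omega) (by omega)
              rw [hrg]
              have := hD (y - a - m) 0 (by omega) (by omega) le_rfl hb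
              rw [show y - a - m + m = y - a by ring] at this
              exact this.symm
            · rw [rho_id (by omega) (by omega)]
        rw [h1, h2, h3, hsh]
  · -- period (m, 0)
    rintro ⟨i, j⟩
    simp only [Prod.mk_add_mk, add_zero]
    rw [show i + m - a * (j / b) = (i - a * (j / b)) + 1 * m by ring, rho_add_mul]
  · -- period (a, b)
    rintro ⟨i, j⟩
    simp only [Prod.mk_add_mk]
    obtain ⟨e1, e2⟩ := ediv_emod_add_b j hb
    rw [e1, e2, show i + a - a * (j / b + 1) = i - a * (j / b) by ring]

theorem periodic_implies_doubly_periodic (S : WangTileset)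
    (h : ∃ (c : ℤ × ℤ → S.T) (v : ℤ × ℤ), S.IsTiling c ∧ IsPeriodOf c v) :
    ∃ (c : ℤ × ℤ → S.T) (v₁ v₂ : ℤ × ℤ), S.IsTiling c ∧ IsPeriodOf c v₁ ∧
      IsPeriodOf c v₂ ∧ v₁.1 * v₂.2 - v₁.2 * v₂.1 ≠ 0 := by
  haveI := S.tFin
  obtain ⟨c, v, htil, hvne, hper⟩ := h
  -- flipping a period vector
  have hflip : ∀ (a b : ℤ), (∀ p, c (p + (a, b)) = c p) →
      ∀ p : ℤ × ℤ, c (p + (-a, -b)) = c p := by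
    intro a b hp p
    have h2 := hp (p + (-a, -b))
    rw [show p + (-a, -b) + (a, b) = p by
      obtain ⟨x, y⟩ := p
      simp [Prod.mk_add_mk, Prod.ext_iff]] at h2
    exact h2.symm
  -- the main case: period (a, b) with b > 0
  have main : ∀ (a b : ℤ), 0 < b → (∀ p, c (p + (a, b)) = c p) →
      ∃ (c' : ℤ × ℤ → S.T) (v₁ v₂ : ℤ × ℤ), S.IsTiling c' ∧ IsPeriodOf c' v₁ ∧
        IsPeriodOf c' v₂ ∧ v₁.1 * v₂.2 - v₁.2 * v₂.1 ≠ 0 := by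
    intro a b hb hp
    obtain ⟨c', m, hm, htil', hp1, hp2⟩ := key S.up S.down S.left S.right c htil a b hb hp
    refine ⟨c', (m, 0), (a, b), htil', ⟨?_, hp1⟩, ⟨?_, hp2⟩, ?_⟩
    · exact fun h0 => hm.ne' (congrArg Prod.fst h0)
    · exact fun h0 => hb.ne' (congrArg Prod.snd h0)
    · simp only
      have : m * b - 0 * a = m * b := by ring
      rw [this]
      exact (mul_pos hm hb).ne'
  -- the symmetric case: period (a, 0) with a > 0
  have mainH : ∀ (a : ℤ), 0 < a → (∀ p, c (p + (a, 0)) = c p) →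
      ∃ (c' : ℤ × ℤ → S.T) (v₁ v₂ : ℤ × ℤ), S.IsTiling c' ∧ IsPeriodOf c' v₁ ∧
        IsPeriodOf c' v₂ ∧ v₁.1 * v₂.2 - v₁.2 * v₂.1 ≠ 0 := by
    intro a ha hp
    obtain ⟨d', m, hm, htil', hp1, hp2⟩ :=
      key S.right S.left S.down S.up (fun p => c (p.2, p.1))
        (fun i j => ⟨(htil j i).2, (htil j i).1⟩) 0 a ha
        (fun p => by
          obtain ⟨pi, pj⟩ := p
          have h2 := hp (pj, pi)
          simp only [Prod.mk_add_mk, add_zero] at h2 ⊢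
          exact h2)
    refine ⟨fun p => d' (p.2, p.1), (0, m), (a, 0), ?_, ⟨?_, ?_⟩, ⟨?_, ?_⟩, ?_⟩
    · intro i j
      exact ⟨(htil' j i).2, (htil' j i).1⟩
    · exact fun h0 => hm.ne' (congrArg Prod.snd h0)
    · rintro ⟨pi, pj⟩
      have h2 := hp1 (pj, pi)
      simp only [Prod.mk_add_mk, add_zero] at h2 ⊢
      exact h2
    · exact fun h0 => ha.ne' (congrArg Prod.fst h0)
    · rintro ⟨pi, pj⟩
      have h2 := hp2 (pj, pi)
      simp only [Prod.mk_add_mk, add_zero] at h2 ⊢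
      exact h2
    · simp only
      have : (0 : ℤ) * 0 - m * a = -(m * a) := by ring
      rw [this]
      simpa using (mul_pos hm ha).ne'
  obtain ⟨a, b⟩ := v
  rcases lt_trichotomy b 0 with hb | hb | hb
  · exact main (-a) (-b) (by omega) (hflip a b hper)
  · subst hb
    have ha : a ≠ 0 := by
      intro h0
      exact hvne (by simp [h0, Prod.ext_iff])
    rcases lt_or_gt_of_ne ha with ha' | ha'
    · exact mainH (-a) (by omega) (by
        have := hflip a 0 hper
        simpa using this)
    · exact mainH a ha' hper
  · exact main a b hb hper
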